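/- arXiv:1910.07887 — 2 statements merged into one kernel-verified Lean document; each statement's English description precedes it below -/
import Mathlib

section
/- Let 0 ≤ γ < α < 1 and let y : (0,1] → ℝ be continuous with t ↦ t^γ y(t) extending continuously to [0,1]. Then the Riemann–Liouville fractional integral I_{0+}^α y(t) tends to 0 as t → 0^+. -/
/-!
Since `t ^ γ * y t` is bounded by some `M` on `(0, 1]`, we have `|y s| ≤ M * s ^ (-γ)` there.
Rescaling `s = t * u` turns the Abel kernel integral of `s ^ (-γ)` into
`t ^ (α - γ)` times the convergent Beta-type integral `∫₀¹ (1 - u) ^ (α - 1) * u ^ (-γ)`,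
so `|I^α y (t)| = O(t ^ (α - γ))`, which tends to `0` because `γ < α`.
-/

open Real Set Filter MeasureTheory

lemma intervalIntegrable_sub_rpow_mul_rpow_half {p q b : ℝ} (hq : -1 < q) (hb : 0 < b) :
    IntervalIntegrable (fun s : ℝ => (b - s) ^ p * s ^ q) volume 0 (b / 2) := by
  refine (intervalIntegral.intervalIntegrable_rpow' hq).continuousOn_mul ?_
  have hcont : ContinuousOn (fun s : ℝ => b - s) (uIcc 0 (b / 2)) := by fun_prop
  refine hcont.rpow_const fun s hs => Or.inl ?_
  rw [uIcc_of_le (by positivity)] at hs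
  exact sub_ne_zero.mpr (by linarith [hs.2])

lemma intervalIntegrable_sub_rpow_mul_rpow {p q b : ℝ} (hp : -1 < p) (hq : -1 < q) (hb : 0 < b) :
    IntervalIntegrable (fun s : ℝ => (b - s) ^ p * s ^ q) volume 0 b := by
  refine (intervalIntegrable_sub_rpow_mul_rpow_half hq hb).trans ?_
  -- the second half is the first half with `p` and `q` swapped, reflected by `s ↦ b - s`
  have h := (intervalIntegrable_sub_rpow_mul_rpow_half (p := q) hp hb).comp_sub_left b
  simpa only [sub_sub_cancel, sub_zero, sub_half, mul_comm] using h.symm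

lemma integral_sub_rpow_mul_rpow_eq {p q t : ℝ} (ht : 0 < t) :
    ∫ s in (0 : ℝ)..t, (t - s) ^ p * s ^ q =
      t ^ (p + q + 1) * ∫ u in (0 : ℝ)..1, (1 - u) ^ p * u ^ q := by
  have hscale := intervalIntegral.smul_integral_comp_mul_left
    (fun s => (t - s) ^ p * s ^ q) t (a := 0) (b := 1)
  rw [mul_zero, mul_one] at hscale
  rw [← hscale, smul_eq_mul, ← intervalIntegral.integral_const_mul,
    ← intervalIntegral.integral_const_mul]
  refine intervalIntegral.integral_congr fun u hu => ?_
  rw [uIcc_of_le zero_le_one] at hu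
  have hu1 : 0 ≤ 1 - u := by linarith [hu.2]
  rw [show t - t * u = t * (1 - u) by ring, mul_rpow ht.le hu1, mul_rpow ht.le hu.1,
    rpow_add ht, rpow_add ht, rpow_one]
  ring

lemma abs_integral_sub_rpow_mul_le {α γ M t : ℝ} {y : ℝ → ℝ} (hα : 0 < α) (hγ : γ < 1)
    (hM : 0 ≤ M) (ht : 0 < t) (hy : ∀ s ∈ Ioc 0 t, |y s| ≤ M * s ^ (-γ)) :
    |∫ s in (0 : ℝ)..t, (t - s) ^ (α - 1) * y s| ≤
      M * (∫ u in (0 : ℝ)..1, (1 - u) ^ (α - 1) * u ^ (-γ)) * t ^ (α - γ) := by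
  have hbound : ∀ᵐ s ∂volume.restrict (uIoc 0 t),
      ‖(t - s) ^ (α - 1) * y s‖ ≤ M * ((t - s) ^ (α - 1) * s ^ (-γ)) := by
    rw [uIoc_of_le ht.le]
    refine (ae_restrict_iff' measurableSet_Ioc).mpr (Eventually.of_forall fun s hs => ?_)
    have hkernel : 0 ≤ (t - s) ^ (α - 1) := rpow_nonneg (by linarith [hs.2]) _
    rw [norm_eq_abs, abs_mul, abs_of_nonneg hkernel]
    nlinarith [hy s hs]
  have hint := (intervalIntegrable_sub_rpow_mul_rpow (p := α - 1) (q := -γ)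
    (by linarith) (by linarith) ht).const_mul M
  have hbeta : 0 ≤ ∫ u in (0 : ℝ)..1, (1 - u) ^ (α - 1) * u ^ (-γ) :=
    intervalIntegral.integral_nonneg zero_le_one fun u hu =>
      mul_nonneg (rpow_nonneg (by linarith [hu.2]) _) (rpow_nonneg hu.1 _)
  calc |∫ s in (0 : ℝ)..t, (t - s) ^ (α - 1) * y s|
      ≤ |∫ s in (0 : ℝ)..t, M * ((t - s) ^ (α - 1) * s ^ (-γ))| :=
        intervalIntegral.norm_integral_le_abs_of_norm_le hbound hint
    _ = M * (∫ u in (0 : ℝ)..1, (1 - u) ^ (α - 1) * u ^ (-γ)) * t ^ (α - γ) := by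
        rw [intervalIntegral.integral_const_mul, integral_sub_rpow_mul_rpow_eq ht,
          show α - 1 + -γ + 1 = α - γ by ring, abs_of_nonneg (by positivity)]
        ring

lemma exists_abs_le_mul_rpow_neg {γ : ℝ} {y C : ℝ → ℝ} (hC : ContinuousOn C (Icc 0 1))
    (hCy : ∀ t ∈ Ioc (0 : ℝ) 1, C t = t ^ γ * y t) :
    ∃ M, 0 ≤ M ∧ ∀ s ∈ Ioc (0 : ℝ) 1, |y s| ≤ M * s ^ (-γ) := by
  obtain ⟨M, hM⟩ := isCompact_Icc.exists_bound_of_continuousOn hC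
  refine ⟨M, (norm_nonneg _).trans (hM 0 ⟨le_rfl, zero_le_one⟩), fun s hs => ?_⟩
  have hy : y s = s ^ (-γ) * C s := by
    rw [hCy s hs, ← mul_assoc, ← rpow_add hs.1, neg_add_cancel, rpow_zero, one_mul]
  rw [hy, abs_mul, abs_of_pos (rpow_pos_of_pos hs.1 _), mul_comm M]
  exact mul_le_mul_of_nonneg_left (hM s (Ioc_subset_Icc_self hs)) (rpow_nonneg hs.1.le _)

theorem stmt_4_general (α γ : ℝ) (hγ0 : 0 ≤ γ) (hγα : γ < α) (hα1 : α < 1)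
    (y : ℝ → ℝ)
    (hext : ∃ C : ℝ → ℝ, ContinuousOn C (Icc 0 1) ∧
      ∀ t ∈ Ioc (0:ℝ) 1, C t = t ^ γ * y t) :
    Tendsto (fun t : ℝ => (1 / Real.Gamma α) * ∫ s in (0:ℝ)..t, (t - s) ^ (α - 1) * y s)
      (nhdsWithin 0 (Ioi 0)) (nhds 0) := by
  obtain ⟨C, hC, hCy⟩ := hext
  obtain ⟨M, hM, hy⟩ := exists_abs_le_mul_rpow_neg hC hCy
  set B := ∫ u in (0 : ℝ)..1, (1 - u) ^ (α - 1) * u ^ (-γ)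
  have hpow : Tendsto (fun t : ℝ => t ^ (α - γ)) (nhdsWithin 0 (Ioi 0)) (nhds 0) :=
    ((continuous_rpow_const (by linarith)).tendsto' 0 0
      (zero_rpow (by linarith))).mono_left nhdsWithin_le_nhds
  refine squeeze_zero_norm' ?_ (by simpa only [mul_zero] using hpow.const_mul (|1 / Gamma α| * (M * B)))
  filter_upwards [Ioc_mem_nhdsGT zero_lt_one] with t ht
  have hyt : ∀ s ∈ Ioc 0 t, |y s| ≤ M * s ^ (-γ) :=
    fun s hs => hy s ⟨hs.1, hs.2.trans ht.2⟩
  rw [norm_mul, norm_eq_abs, norm_eq_abs, mul_assoc]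
  exact mul_le_mul_of_nonneg_left
    (abs_integral_sub_rpow_mul_le (by linarith) (by linarith) hM ht.1 hyt) (abs_nonneg _)

theorem stmt_4 (α γ : ℝ) (hγ0 : 0 ≤ γ) (hγα : γ < α) (hα1 : α < 1)
    (y : ℝ → ℝ) (hy : ContinuousOn y (Ioc 0 1))
    (hext : ∃ C : ℝ → ℝ, ContinuousOn C (Icc 0 1) ∧
      ∀ t ∈ Ioc (0:ℝ) 1, C t = t ^ γ * y t) :
    Tendsto (fun t : ℝ => (1 / Real.Gamma α) * ∫ s in (0:ℝ)..t, (t - s) ^ (α - 1) * y s)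
      (nhdsWithin 0 (Ioi 0)) (nhds 0) :=
  stmt_4_general α γ hγ0 hγα hα1 y hext
end

section
/- Let 0 < α ≤ 1, γ ∈ (0,1], λ ≥ 0 with μ := 1 - λ/Γ(γ+1) > 0, Λ ≥ 0, and let f : (0,1]×ℝ → ℝ satisfy |f(t,x) - f(t,y)| ≤ L_f ‖x - y‖ for a constant L_f (with ‖·‖ the weighted sup norm). If (λe/(Γ(γ)μ) + 1/Γ(α+1))·L_f < 1, then the operator Δ defined by Δy(t) = Λ t^{γ-1} + (λ t^{γ-1}/(Γ(γ)μ)) ∫_0^1 (Q(τ)/Γ(α)) f(τ,y(τ)) dτ + (1/Γ(α)) ∫_0^t (t-s)^{α-1} f(s,y(s)) ds is a contraction on the weighted space C_{1-γ}[0,1], i.e., ‖Δy₁ - Δy₂‖ ≤ (λe/(Γ(γ)μ) + 1/Γ(α+1))·L_f·‖y₁ - y₂‖. -/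
/-!
The weight `t ^ (1 - γ)` cancels the factor `t ^ (γ - 1)` of the boundary term, and it turns the
Riemann–Liouville term into `t ^ (1 - γ + α) / Γ(α + 1) ≤ 1 / Γ(α + 1)`, because
`∫₀ᵗ (t - s) ^ (α - 1) ds = t ^ α / α` and `γ ≤ 1`. The boundary term is controlled by
`Q(τ) / Γ(α) = (1 - τ) ^ α / Γ(α + 1) ≤ 1 / Γ(α + 1) ≤ e`, where `Γ(a) ≥ ∫₁^∞ e⁻ˣ dx = e⁻¹` for
`a ≥ 1`. Each of the two integral terms is then a nonnegative kernel integrated against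
`f(s, y₁ s) - f(s, y₂ s)`, which is bounded by `L N`.
-/

open Real Set MeasureTheory intervalIntegral
open scoped Interval

theorem exp_neg_one_le_Gamma {a : ℝ} (ha : 1 ≤ a) : exp (-1) ≤ Gamma a := by
  have ha0 : 0 < a := one_pos.trans_le ha
  have hconv := GammaIntegral_convergent ha0
  rw [Gamma_eq_integral ha0, ← integral_exp_neg_Ioi 1]
  calc ∫ x in Ioi (1 : ℝ), exp (-x)
      ≤ ∫ x in Ioi (1 : ℝ), exp (-x) * x ^ (a - 1) := by
        refine setIntegral_mono_on (by simpa using exp_neg_integrableOn_Ioi 1 one_pos)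
          (hconv.mono_set fun x (hx : 1 < x) => show 0 < x from one_pos.trans hx)
          measurableSet_Ioi fun x (hx : 1 < x) => ?_
        exact le_mul_of_one_le_right (exp_pos _).le (one_le_rpow hx.le (by linarith))
    _ ≤ ∫ x in Ioi (0 : ℝ), exp (-x) * x ^ (a - 1) := by
        refine setIntegral_mono_set hconv ?_ (.of_forall fun x hx => one_pos.trans hx)
        filter_upwards [ae_restrict_mem measurableSet_Ioi] with x (hx : 0 < x)
        positivity

theorem one_div_Gamma_add_one_le_exp_one {α : ℝ} (hα : 0 ≤ α) : 1 / Gamma (α + 1) ≤ exp 1 := by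
  have hG := exp_neg_one_le_Gamma (by linarith : 1 ≤ α + 1)
  rw [div_le_iff₀ (Gamma_pos_of_pos (by linarith))]
  calc (1 : ℝ) = exp 1 * exp (-1) := by rw [← exp_add]; norm_num
    _ ≤ exp 1 * Gamma (α + 1) := by gcongr

theorem integral_sub_rpow_sub_one {α : ℝ} (hα : 0 < α) (a b : ℝ) :
    ∫ s in a..b, (s - a) ^ (α - 1) = (b - a) ^ α / α := by
  rw [integral_comp_sub_right (fun u => u ^ (α - 1)) a, sub_self,
    integral_rpow (Or.inl (by linarith)), zero_rpow (by linarith), sub_zero, sub_add_cancel]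

theorem integral_rpow_sub_one_sub {α : ℝ} (hα : 0 < α) (t : ℝ) :
    ∫ s in (0 : ℝ)..t, (t - s) ^ (α - 1) = t ^ α / α := by
  rw [integral_comp_sub_left (fun u => u ^ (α - 1)) t, sub_zero, sub_self,
    integral_rpow (Or.inl (by linarith)), zero_rpow (by linarith), sub_zero, sub_add_cancel]

theorem intervalIntegrable_rpow_sub_one_sub {α : ℝ} (hα : 0 < α) (t : ℝ) :
    IntervalIntegrable (fun s => (t - s) ^ (α - 1)) volume 0 t := by
  simpa using
    (intervalIntegrable_rpow' (a := t) (b := 0) (by linarith : -1 < α - 1)).comp_sub_left t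

/-- Holds even when `f₁` and `f₂` are not integrable, since then both integrals vanish. -/
theorem norm_integral_sub_integral_le {E : Type*} [NormedAddCommGroup E] [NormedSpace ℝ E]
    {μ : Measure ℝ} {f₁ f₂ : ℝ → E} {g : ℝ → ℝ} {a b : ℝ}
    (hm : AEStronglyMeasurable (fun x => f₁ x - f₂ x) (μ.restrict (Ι a b)))
    (hle : ∀ᵐ x ∂μ.restrict (Ι a b), ‖f₁ x - f₂ x‖ ≤ g x) (hg : IntervalIntegrable g μ a b) :
    ‖(∫ x in a..b, f₁ x ∂μ) - ∫ x in a..b, f₂ x ∂μ‖ ≤ |∫ x in a..b, g x ∂μ| := by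
  have hd : IntervalIntegrable (fun x => f₁ x - f₂ x) μ a b :=
    intervalIntegrable_iff.2 (hg.def'.mono' hm hle)
  by_cases h₁ : IntervalIntegrable f₁ μ a b
  · have h₂ : IntervalIntegrable f₂ μ a b := by simpa using h₁.sub hd
    rw [← integral_sub h₁ h₂]
    exact norm_integral_le_abs_of_norm_le hle hg
  · have h₂ : ¬IntervalIntegrable f₂ μ a b := fun h₂ => h₁ (by simpa using h₂.add hd)
    rw [integral_undef h₁, integral_undef h₂, sub_zero, norm_zero]
    exact abs_nonneg _

theorem abs_integral_mul_sub_integral_mul_le {k g₁ g₂ : ℝ → ℝ} {a b M : ℝ} (hab : a < b)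
    (hk : IntervalIntegrable k volume a b) (hk₀ : ∀ x ∈ Ioc a b, 0 ≤ k x)
    (hm : AEStronglyMeasurable (fun x => g₁ x - g₂ x) (volume.restrict (Ioc a b)))
    (hle : ∀ x ∈ Ioc a b, |g₁ x - g₂ x| ≤ M) :
    |(∫ x in a..b, k x * g₁ x) - ∫ x in a..b, k x * g₂ x| ≤ (∫ x in a..b, k x) * M := by
  have hM : 0 ≤ M := (abs_nonneg _).trans (hle b ⟨hab, le_rfl⟩)
  have hkM : 0 ≤ ∫ x in a..b, k x * M := by
    rw [integral_of_le hab.le]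
    exact setIntegral_nonneg measurableSet_Ioc fun x hx => mul_nonneg (hk₀ x hx) hM
  calc |(∫ x in a..b, k x * g₁ x) - ∫ x in a..b, k x * g₂ x|
      ≤ |∫ x in a..b, k x * M| := by
        refine (Real.norm_eq_abs _).symm.trans_le <|
          norm_integral_sub_integral_le ?_ ?_ (hk.mul_const M) <;> rw [uIoc_of_le hab.le]
        · simpa only [← mul_sub] using hk.1.aestronglyMeasurable.fun_mul hm
        · filter_upwards [ae_restrict_mem measurableSet_Ioc] with x hx
          rw [← mul_sub, norm_mul, norm_of_nonneg (hk₀ x hx)]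
          exact mul_le_mul_of_nonneg_left (hle x hx) (hk₀ x hx)
    _ = (∫ x in a..b, k x) * M := by rw [abs_of_nonneg hkM, intervalIntegral.integral_mul_const]

theorem abs_integral_tailKernel_mul_sub_le {α M : ℝ} (hα : 0 < α) {g₁ g₂ : ℝ → ℝ}
    (hm : AEStronglyMeasurable (fun τ => g₁ τ - g₂ τ) (volume.restrict (Ioc 0 1)))
    (hle : ∀ τ ∈ Ioc (0 : ℝ) 1, |g₁ τ - g₂ τ| ≤ M) :
    |(∫ τ in (0 : ℝ)..1, ((∫ s in τ..1, (s - τ) ^ (α - 1)) / Gamma α) * g₁ τ)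
        - ∫ τ in (0 : ℝ)..1, ((∫ s in τ..1, (s - τ) ^ (α - 1)) / Gamma α) * g₂ τ|
      ≤ exp 1 * M := by
  have hM : 0 ≤ M := (abs_nonneg _).trans (hle 1 ⟨one_pos, le_rfl⟩)
  have hk : Continuous fun τ : ℝ => (1 - τ) ^ α / α / Gamma α := by
    fun_prop (disch := exact hα.le)
  have hk_le : ∀ τ ∈ Icc (0 : ℝ) 1, (1 - τ) ^ α / α / Gamma α ≤ 1 / Gamma (α + 1) := by
    intro τ hτ
    rw [Gamma_add_one hα.ne', ← div_div]
    gcongr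
    exact rpow_le_one (by linarith [hτ.2]) (by linarith [hτ.1]) hα.le
  simp_rw [integral_sub_rpow_sub_one hα]
  calc _ ≤ (∫ τ in (0 : ℝ)..1, (1 - τ) ^ α / α / Gamma α) * M :=
        abs_integral_mul_sub_integral_mul_le one_pos (hk.intervalIntegrable 0 1)
          (fun τ hτ => by have := rpow_nonneg (sub_nonneg.2 hτ.2) α; positivity) hm hle
    _ ≤ (∫ _ in (0 : ℝ)..1, 1 / Gamma (α + 1)) * M := by
        gcongr
        exact integral_mono_on zero_le_one (hk.intervalIntegrable 0 1) intervalIntegrable_const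
          hk_le
    _ ≤ exp 1 * M := by
        rw [intervalIntegral.integral_const, sub_zero, one_smul]
        gcongr
        exact one_div_Gamma_add_one_le_exp_one hα.le

theorem abs_integral_rpow_sub_mul_sub_le {α t M : ℝ} (hα : 0 < α) (ht : 0 < t) {g₁ g₂ : ℝ → ℝ}
    (hm : AEStronglyMeasurable (fun s => g₁ s - g₂ s) (volume.restrict (Ioc 0 t)))
    (hle : ∀ s ∈ Ioc 0 t, |g₁ s - g₂ s| ≤ M) :
    |(∫ s in (0 : ℝ)..t, (t - s) ^ (α - 1) * g₁ s) - ∫ s in (0 : ℝ)..t, (t - s) ^ (α - 1) * g₂ s|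
      ≤ t ^ α / α * M :=
  integral_rpow_sub_one_sub hα t ▸ abs_integral_mul_sub_integral_mul_le ht
    (intervalIntegrable_rpow_sub_one_sub hα t) (fun _ hs => rpow_nonneg (sub_nonneg.2 hs.2) _)
    hm hle

theorem rpow_one_sub_div_Gamma_mul_rpow_div_le {α γ t : ℝ} (hα : 0 < α) (hγ : γ ≤ 1)
    (ht₀ : 0 < t) (ht₁ : t ≤ 1) : t ^ (1 - γ) / Gamma α * (t ^ α / α) ≤ 1 / Gamma (α + 1) := by
  have hGα := Gamma_pos_of_pos hα
  have hpow : t ^ (1 - γ) * t ^ α ≤ 1 := by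
    rw [← rpow_add ht₀]
    exact rpow_le_one ht₀.le ht₁ (by linarith)
  rw [Gamma_add_one hα.ne']
  calc t ^ (1 - γ) / Gamma α * (t ^ α / α) = t ^ (1 - γ) * t ^ α / (α * Gamma α) := by ring
    _ ≤ 1 / (α * Gamma α) := by gcongr

theorem stmt_14_general (α γ lam μ Λ L N : ℝ) (hα : 0 < α)
    (hγ : 0 < γ) (hγ1 : γ ≤ 1) (hlam : 0 ≤ lam)
    (hμpos : 0 < μ)
    (f : ℝ → ℝ → ℝ) (y₁ y₂ : ℝ → ℝ)
    (hLip : ∀ t ∈ Ioc (0:ℝ) 1, |f t (y₁ t) - f t (y₂ t)| ≤ L * N)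
    (hint₁ : IntervalIntegrable (fun s => f s (y₁ s)) MeasureTheory.volume 0 1)
    (hint₂ : IntervalIntegrable (fun s => f s (y₂ s)) MeasureTheory.volume 0 1) :
    ∀ t ∈ Ioc (0:ℝ) 1,
      |t ^ (1 - γ) *
        ((Λ * t ^ (γ - 1)
            + (lam * t ^ (γ - 1) / (Real.Gamma γ * μ)) *
                (∫ τ in (0:ℝ)..1,
                  ((∫ s in τ..1, (s - τ) ^ (α - 1)) / Real.Gamma α) * f τ (y₁ τ))
            + (1 / Real.Gamma α) * ∫ s in (0:ℝ)..t, (t - s) ^ (α - 1) * f s (y₁ s))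
          - (Λ * t ^ (γ - 1)
            + (lam * t ^ (γ - 1) / (Real.Gamma γ * μ)) *
                (∫ τ in (0:ℝ)..1,
                  ((∫ s in τ..1, (s - τ) ^ (α - 1)) / Real.Gamma α) * f τ (y₂ τ))
            + (1 / Real.Gamma α) * ∫ s in (0:ℝ)..t, (t - s) ^ (α - 1) * f s (y₂ s)))|
        ≤ (lam * Real.exp 1 / (Real.Gamma γ * μ) + 1 / Real.Gamma (α + 1)) * L * N := by
  intro t ⟨ht₀, ht₁⟩
  have hM : 0 ≤ L * N := (abs_nonneg _).trans (hLip 1 ⟨one_pos, le_rfl⟩)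
  have hmeas : ∀ b ≤ 1, AEStronglyMeasurable (fun s => f s (y₁ s) - f s (y₂ s))
      (volume.restrict (Ioc 0 b)) := fun b hb =>
    (hint₁.1.mono_set (Ioc_subset_Ioc_right hb)).aestronglyMeasurable.sub
      (hint₂.1.mono_set (Ioc_subset_Ioc_right hb)).aestronglyMeasurable
  have hA := abs_integral_tailKernel_mul_sub_le hα (hmeas 1 le_rfl) hLip
  have hC := abs_integral_rpow_sub_mul_sub_le hα ht₀ (hmeas t ht₁)
    fun s hs => hLip s ⟨hs.1, hs.2.trans ht₁⟩
  have hcancel : t ^ (1 - γ) * t ^ (γ - 1) = 1 := by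
    rw [← rpow_add ht₀, sub_add_sub_cancel', sub_self, rpow_zero]
  set A₁ := ∫ τ in (0:ℝ)..1, ((∫ s in τ..1, (s - τ) ^ (α - 1)) / Gamma α) * f τ (y₁ τ)
  set A₂ := ∫ τ in (0:ℝ)..1, ((∫ s in τ..1, (s - τ) ^ (α - 1)) / Gamma α) * f τ (y₂ τ)
  set C₁ := ∫ s in (0:ℝ)..t, (t - s) ^ (α - 1) * f s (y₁ s)
  set C₂ := ∫ s in (0:ℝ)..t, (t - s) ^ (α - 1) * f s (y₂ s)
  have hcoef : 0 ≤ lam / (Gamma γ * μ) := by have := Gamma_pos_of_pos hγ; positivity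
  calc _ = |lam / (Gamma γ * μ) * (A₁ - A₂) + t ^ (1 - γ) / Gamma α * (C₁ - C₂)| := by
        congr 1; linear_combination (lam / (Gamma γ * μ) * (A₁ - A₂)) * hcancel
    _ ≤ lam / (Gamma γ * μ) * (exp 1 * (L * N))
          + t ^ (1 - γ) / Gamma α * (t ^ α / α * (L * N)) := by
        refine (abs_add_le _ _).trans (add_le_add ?_ ?_) <;>
          rw [abs_mul, abs_of_nonneg (by positivity)]
        · exact mul_le_mul_of_nonneg_left hA hcoef
        · exact mul_le_mul_of_nonneg_left hC (by positivity)
    _ ≤ lam / (Gamma γ * μ) * (exp 1 * (L * N)) + 1 / Gamma (α + 1) * (L * N) := by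
        rw [← mul_assoc (t ^ (1 - γ) / Gamma α)]
        gcongr
        exact rpow_one_sub_div_Gamma_mul_rpow_div_le hα hγ1 ht₀ ht₁
    _ = _ := by ring

theorem stmt_14 (α γ lam μ Λ L N : ℝ) (hα : 0 < α) (hα1 : α ≤ 1)
    (hγ : 0 < γ) (hγ1 : γ ≤ 1) (hlam : 0 ≤ lam)
    (hμ : μ = 1 - lam / Real.Gamma (γ + 1)) (hμpos : 0 < μ) (hΛ : 0 ≤ Λ)
    (hL : 0 ≤ L)
    (hsmall : (lam * Real.exp 1 / (Real.Gamma γ * μ) + 1 / Real.Gamma (α + 1)) * L < 1)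
    (f : ℝ → ℝ → ℝ) (y₁ y₂ : ℝ → ℝ)
    (hN : N = sSup ((fun t : ℝ => |t ^ (1 - γ) * (y₁ t - y₂ t)|) '' Icc 0 1))
    (hLip : ∀ t ∈ Ioc (0:ℝ) 1, |f t (y₁ t) - f t (y₂ t)| ≤ L * N)
    (hint₁ : IntervalIntegrable (fun s => f s (y₁ s)) MeasureTheory.volume 0 1)
    (hint₂ : IntervalIntegrable (fun s => f s (y₂ s)) MeasureTheory.volume 0 1) :
    ∀ t ∈ Ioc (0:ℝ) 1,
      |t ^ (1 - γ) *
        ((Λ * t ^ (γ - 1)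
            + (lam * t ^ (γ - 1) / (Real.Gamma γ * μ)) *
                (∫ τ in (0:ℝ)..1,
                  ((∫ s in τ..1, (s - τ) ^ (α - 1)) / Real.Gamma α) * f τ (y₁ τ))
            + (1 / Real.Gamma α) * ∫ s in (0:ℝ)..t, (t - s) ^ (α - 1) * f s (y₁ s))
          - (Λ * t ^ (γ - 1)
            + (lam * t ^ (γ - 1) / (Real.Gamma γ * μ)) *
                (∫ τ in (0:ℝ)..1,
                  ((∫ s in τ..1, (s - τ) ^ (α - 1)) / Real.Gamma α) * f τ (y₂ τ))
            + (1 / Real.Gamma α) * ∫ s in (0:ℝ)..t, (t - s) ^ (α - 1) * f s (y₂ s)))|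
        ≤ (lam * Real.exp 1 / (Real.Gamma γ * μ) + 1 / Real.Gamma (α + 1)) * L * N :=
  stmt_14_general α γ lam μ Λ L N hα hγ hγ1 hlam hμpos f y₁ y₂ hLip hint₁ hint₂
end
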